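/- Let v₁, v₂, v₃ be nonzero real numbers, V₁, V₂, V₃ real numbers and c, c̃ real constants with c ≠ c̃, satisfying the system (⋆). Then V₁ ≠ 0 and Θ ≠ 0, where Θ := −v₁² + v₁⁴ + v₂² − 10v₁²v₂² + 9v₁⁴v₂² + v₂⁴ − 9v₁²v₂⁴. -/

import Mathlib

/-!
The two linear conditions on `V` cut out a line: `V` is `V₁ / S` times
`w = (S, -v₂ (v₃² - v₁²), -v₃ (v₁² + v₂²))` with `S = v₁ (v₂² + v₃²) ≠ 0`. Hence
`S² (c - c̃) = V₁² ⟨w, w⟩` for the form `x² - y² + z²`, and on the quadric `⟨v, v⟩ = 1`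
one has `⟨w, w⟩ = -Θ`. Since `c ≠ c̃`, neither `V₁` nor `Θ` vanishes.
-/

def lorentzSq (x y z : ℝ) : ℝ := x ^ 2 - y ^ 2 + z ^ 2

def theta (v₁ v₂ : ℝ) : ℝ :=
  -v₁ ^ 2 + v₁ ^ 4 + v₂ ^ 2 - 10 * v₁ ^ 2 * v₂ ^ 2
    + 9 * v₁ ^ 4 * v₂ ^ 2 + v₂ ^ 4 - 9 * v₁ ^ 2 * v₂ ^ 4

lemma mul_add_mul_add_mul_eq_zero_of_div_add_div_add_div_eq_zero {v₁ v₂ v₃ V₁ V₂ V₃ : ℝ}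
    (hv₁ : v₁ ≠ 0) (hv₂ : v₂ ≠ 0) (hv₃ : v₃ ≠ 0) (h : V₁ / v₁ + V₂ / v₂ + V₃ / v₃ = 0) :
    v₂ * v₃ * V₁ + v₁ * v₃ * V₂ + v₁ * v₂ * V₃ = 0 := by
  field_simp at h
  linear_combination h

lemma sq_mul_lorentzSq_eq {v₁ v₂ v₃ V₁ V₂ V₃ : ℝ}
    (h1 : v₁ * V₁ - v₂ * V₂ + v₃ * V₃ = 0)
    (h3 : v₂ * v₃ * V₁ + v₁ * v₃ * V₂ + v₁ * v₂ * V₃ = 0) :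
    (v₁ * (v₂ ^ 2 + v₃ ^ 2)) ^ 2 * lorentzSq V₁ V₂ V₃ =
      V₁ ^ 2 * lorentzSq (v₁ * (v₂ ^ 2 + v₃ ^ 2)) (v₂ * (v₃ ^ 2 - v₁ ^ 2))
        (v₃ * (v₁ ^ 2 + v₂ ^ 2)) := by
  have e2 : v₁ * (v₂ ^ 2 + v₃ ^ 2) * V₂ + v₂ * (v₃ ^ 2 - v₁ ^ 2) * V₁ = 0 := by
    linear_combination v₃ * h3 - v₁ * v₂ * h1
  have e3 : v₁ * (v₂ ^ 2 + v₃ ^ 2) * V₃ + v₃ * (v₁ ^ 2 + v₂ ^ 2) * V₁ = 0 := by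
    linear_combination v₂ * h3 + v₁ * v₃ * h1
  unfold lorentzSq
  linear_combination
    -(v₁ * (v₂ ^ 2 + v₃ ^ 2) * V₂ - v₂ * (v₃ ^ 2 - v₁ ^ 2) * V₁) * e2
      + (v₁ * (v₂ ^ 2 + v₃ ^ 2) * V₃ - v₃ * (v₁ ^ 2 + v₂ ^ 2) * V₁) * e3

lemma lorentzSq_eq_neg_theta {v₁ v₂ v₃ : ℝ} (h : lorentzSq v₁ v₂ v₃ = 1) :
    lorentzSq (v₁ * (v₂ ^ 2 + v₃ ^ 2)) (v₂ * (v₃ ^ 2 - v₁ ^ 2)) (v₃ * (v₁ ^ 2 + v₂ ^ 2)) =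
      -theta v₁ v₂ := by
  unfold lorentzSq theta at *
  linear_combination (v₁ ^ 2 * v₃ ^ 2 - v₂ ^ 2 * v₃ ^ 2 + 8 * v₁ ^ 2 * v₂ ^ 2
    + v₁ ^ 2 - v₂ ^ 2) * h

/-- under the system (⋆) with c ≠ c̃, one has V₁ ≠ 0 and Θ ≠ 0. -/
theorem stmt_5 (v₁ v₂ v₃ V₁ V₂ V₃ c ct : ℝ)
    (hv₁ : v₁ ≠ 0) (hv₂ : v₂ ≠ 0) (hv₃ : v₃ ≠ 0) (hc : c ≠ ct)
    (h0 : v₁ ^ 2 - v₂ ^ 2 + v₃ ^ 2 = 1)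
    (h1 : v₁ * V₁ - v₂ * V₂ + v₃ * V₃ = 0)
    (h2 : V₁ ^ 2 - V₂ ^ 2 + V₃ ^ 2 = c - ct)
    (h3 : V₁ / v₁ + V₂ / v₂ + V₃ / v₃ = 0) :
    V₁ ≠ 0 ∧
    -v₁ ^ 2 + v₁ ^ 4 + v₂ ^ 2 - 10 * v₁ ^ 2 * v₂ ^ 2
      + 9 * v₁ ^ 4 * v₂ ^ 2 + v₂ ^ 4 - 9 * v₁ ^ 2 * v₂ ^ 4 ≠ 0 := by
  have hS : v₁ * (v₂ ^ 2 + v₃ ^ 2) ≠ 0 := by positivity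
  have key := sq_mul_lorentzSq_eq h1
    (mul_add_mul_add_mul_eq_zero_of_div_add_div_add_div_eq_zero hv₁ hv₂ hv₃ h3)
  rw [lorentzSq_eq_neg_theta h0, lorentzSq, h2] at key
  have hne : V₁ ^ 2 * -theta v₁ v₂ ≠ 0 := by
    rw [← key]
    exact mul_ne_zero (pow_ne_zero 2 hS) (sub_ne_zero.mpr hc)
  obtain ⟨hV₁, hθ⟩ := mul_ne_zero_iff.mp hne
  exact ⟨pow_ne_zero_iff two_ne_zero |>.mp hV₁, neg_ne_zero.mp hθ⟩
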